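/- arXiv:1405.1943 — 3 statements merged into one kernel-verified Lean document; each statement's English description precedes it below -/
import Mathlib

section
/- For every k ∈ ℤ₊ and every λ > 1 there is a constant C > 0, depending only on x* (and not on k, λ, p), such that for j = 1, 2 and every x ∈ ℝ², | ∫_{ℝ²} K_j(x − y) β_{k,λ}(y) dy | ≤ C k^{-1/2} λ^{-1 + 2/p} ‖ρ‖_∞, where K_j(z) = z_j / (2π |z|²) is the kernel of ∂_j Δ^{-1} (so the left-hand side is |∂_j Δ^{-1} β_{k,λ}(x)|). -/
open Real MeasureTheory
open scoped ENNReal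

noncomputable section

/-- The plane `ℝ²` with the Euclidean norm. -/
abbrev E2 := EuclideanSpace ℝ (Fin 2)

/-- Sign `±1` attached to a boolean. -/
def sgn (b : Bool) : ℝ := if b then 1 else -1

/-- The point `(a, b) ∈ ℝ²`. -/
def vec2 (a b : ℝ) : E2 := WithLp.toLp 2 ![a, b]

/-- The reflected points `x*_ε = (ε₁ x₁*, ε₂ x₂*)`. -/
def xStarSign (xs : E2) (ε : Bool × Bool) : E2 :=
  vec2 (sgn ε.1 * xs 0) (sgn ε.2 * xs 1)

/-- `β_{k,λ}(x) = (λ^{−1+2/p}/√k) Σ_{ε₁,ε₂=±1} ε₁ε₂ ρ(λ(x − x*_ε)) sin(k x₁)`. -/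
noncomputable def betaKL (xs : E2) (ρ : E2 → ℝ) (k : ℕ) (l p : ℝ) (x : E2) : ℝ :=
  l ^ (-1 + 2/p) / Real.sqrt k *
    ∑ ε : Bool × Bool,
      sgn ε.1 * sgn ε.2 * ρ (l • (x - xStarSign xs ε)) * Real.sin (k * x 0)

lemma abs_coord_le_norm (v : E2) (j : Fin 2) : |v j| ≤ ‖v‖ := by
  rw [EuclideanSpace.norm_eq]
  calc |v j| = Real.sqrt (‖v j‖ ^ 2) := by
        rw [Real.sqrt_sq_eq_abs, Real.norm_eq_abs, abs_abs]
    _ ≤ Real.sqrt (∑ i, ‖v i‖ ^ 2) :=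
        Real.sqrt_le_sqrt (Finset.single_le_sum (f := fun i => ‖v i‖ ^ 2)
          (fun i _ => sq_nonneg _) (Finset.mem_univ j))

lemma vol_ball (c : E2) (r : ℝ) (hr : 0 ≤ r) :
    volume (Metric.ball c r) = ENNReal.ofReal (π * r ^ 2) := by
  rw [EuclideanSpace.volume_ball]
  have h2 : Fintype.card (Fin 2) = 2 := by simp
  rw [h2]
  rw [show Real.sqrt π ^ 2 / Real.Gamma ((2:ℕ) / 2 + 1) = π by
    push_cast
    norm_num
    rw [Real.sq_sqrt pi_pos.le]]
  rw [← ENNReal.ofReal_pow hr, ← ENNReal.ofReal_mul (by positivity)]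
  ring_nf

lemma lint_ball_inv_norm (R : ℝ) (hR : 0 < R) :
    ∫⁻ z in Metric.ball (0 : E2) R, ENNReal.ofReal ‖z‖⁻¹ ≤ ENNReal.ofReal (4 * π * R) := by
  set A : ℕ → Set E2 := fun n =>
    Metric.ball 0 (R / 2 ^ n) \ Metric.ball 0 (R / 2 ^ (n + 1)) with hA
  have hcover : Metric.ball (0 : E2) R ⊆ {0} ∪ ⋃ n, A n := by
    intro z hz
    rcases eq_or_ne z 0 with rfl | hz0
    · exact Or.inl rfl
    · have hzn : 0 < ‖z‖ := norm_pos_iff.2 hz0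
      have hex : ∃ n : ℕ, R / 2 ^ (n + 1) ≤ ‖z‖ := by
        obtain ⟨n, hn⟩ := pow_unbounded_of_one_lt (R / ‖z‖) (one_lt_two (α := ℝ))
        refine ⟨n, le_of_lt ?_⟩
        rw [div_lt_iff₀ hzn] at hn
        rw [div_lt_iff₀ (by positivity)]
        have h2 : (2:ℝ) ^ n ≤ 2 ^ (n+1) := by
          apply pow_le_pow_right₀ (by norm_num) (Nat.le_succ n)
        nlinarith
      right
      refine Set.mem_iUnion.2 ⟨Nat.find hex, ?_, fun hmem => ?_⟩
      · rw [Metric.mem_ball, dist_zero_right]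
        rcases Nat.eq_zero_or_pos (Nat.find hex) with h0 | hpos
        · rw [h0]
          have := Metric.mem_ball.1 hz
          rw [dist_zero_right] at this
          simpa using this
        · have hmin := Nat.find_min hex (Nat.sub_lt hpos one_pos)
          push_neg at hmin
          have : Nat.find hex - 1 + 1 = Nat.find hex := Nat.succ_pred_eq_of_pos hpos
          rwa [this] at hmin
      · rw [Metric.mem_ball, dist_zero_right] at hmem
        exact absurd (Nat.find_spec hex) (not_le.2 hmem)
  calc ∫⁻ z in Metric.ball (0 : E2) R, ENNReal.ofReal ‖z‖⁻¹
      ≤ ∫⁻ z in ({0} ∪ ⋃ n, A n : Set E2), ENNReal.ofReal ‖z‖⁻¹ :=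
        lintegral_mono_set hcover
    _ ≤ (∫⁻ z in ({0} : Set E2), ENNReal.ofReal ‖z‖⁻¹) +
        ∫⁻ z in (⋃ n, A n), ENNReal.ofReal ‖z‖⁻¹ := lintegral_union_le _ _ _
    _ ≤ 0 + ∑' n, ∫⁻ z in A n, ENNReal.ofReal ‖z‖⁻¹ := by
        gcongr
        · refine le_of_eq (setLIntegral_measure_zero _ _ ?_)
          simp
        · exact lintegral_iUnion_le _ _
    _ ≤ 0 + ∑' n : ℕ, ENNReal.ofReal (2 * π * R * 2⁻¹ ^ n) := by
        gcongr with n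
        have hmeas : MeasurableSet (A n) := measurableSet_ball.diff measurableSet_ball
        calc ∫⁻ z in A n, ENNReal.ofReal ‖z‖⁻¹
            ≤ ∫⁻ _ in A n, ENNReal.ofReal (2 ^ (n + 1) / R) := by
              refine setLIntegral_mono' hmeas fun z hz => ?_
              apply ENNReal.ofReal_le_ofReal
              have h1 : R / 2 ^ (n + 1) ≤ ‖z‖ := by
                have := hz.2
                rw [Metric.mem_ball, dist_zero_right, not_lt] at this
                exact this
              have h2 : 0 < R / 2 ^ (n + 1) := by positivity
              calc ‖z‖⁻¹ ≤ (R / 2 ^ (n + 1))⁻¹ := by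
                    exact inv_anti₀ h2 h1
                _ = 2 ^ (n + 1) / R := by rw [inv_div]
          _ = ENNReal.ofReal (2 ^ (n + 1) / R) * volume (A n) := setLIntegral_const _ _
          _ ≤ ENNReal.ofReal (2 ^ (n + 1) / R) * ENNReal.ofReal (π * (R / 2 ^ n) ^ 2) := by
              gcongr
              rw [← vol_ball 0 (R / 2 ^ n) (by positivity)]
              exact measure_mono Set.diff_subset
          _ = ENNReal.ofReal (2 * π * R * 2⁻¹ ^ n) := by
              rw [← ENNReal.ofReal_mul (by positivity)]
              congr 1
              field_simp
              have h2n : ((1:ℝ) / 2) ^ n * 2 ^ n = 1 := by rw [← mul_pow]; norm_num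
              linear_combination (-(2 ^ n * 2 : ℝ)) * h2n
    _ = ENNReal.ofReal (2 * π * R) * ∑' n : ℕ, (ENNReal.ofReal 2⁻¹) ^ n := by
        rw [zero_add, ← ENNReal.tsum_mul_left]
        congr 1 with n
        rw [← ENNReal.ofReal_pow (by norm_num), ← ENNReal.ofReal_mul (by positivity)]
    _ ≤ ENNReal.ofReal (4 * π * R) := by
        have h2 : ENNReal.ofReal (2⁻¹ : ℝ) = 2⁻¹ := by
          rw [ENNReal.ofReal_inv_of_pos (by norm_num)]
          norm_num
        rw [h2, ENNReal.tsum_geometric]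
        have : (1 - 2⁻¹ : ℝ≥0∞)⁻¹ = 2 := by
          rw [ENNReal.one_sub_inv_two, inv_inv]
        rw [this, show (2 : ℝ≥0∞) = ENNReal.ofReal 2 by norm_num,
          ← ENNReal.ofReal_mul (by positivity)]
        apply ENNReal.ofReal_le_ofReal
        nlinarith [pi_pos]

lemma lint_comp_sub (F : E2 → ℝ≥0∞) (x : E2) : ∫⁻ y, F (x - y) = ∫⁻ y, F y := by
  have h1 : ∫⁻ y, F (x + y) = ∫⁻ y, F y := lintegral_add_left_eq_self F x
  have h2 : ∫⁻ y, F (x + (-y)) = ∫⁻ y, F (x + y) := by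
    have h := lintegral_map_equiv (μ := (volume : Measure E2))
      (fun z => F (x + z)) (MeasurableEquiv.neg E2)
    have hmap : Measure.map (⇑(MeasurableEquiv.neg E2)) (volume : Measure E2) = volume := by
      have : ⇑(MeasurableEquiv.neg E2) = (fun z : E2 => -z) := rfl
      rw [this, Measure.map_neg_eq_self]
    rw [hmap] at h
    simpa using h.symm
  simp_rw [sub_eq_add_neg]
  rw [h2, h1]

lemma lint_ball_shift (x : E2) (R : ℝ) :
    ∫⁻ y in Metric.ball x R, ENNReal.ofReal ‖x - y‖⁻¹
      = ∫⁻ z in Metric.ball (0 : E2) R, ENNReal.ofReal ‖z‖⁻¹ := by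
  rw [← lintegral_indicator measurableSet_ball,
    ← lintegral_indicator measurableSet_ball]
  have key : ∀ y, (Metric.ball x R).indicator (fun y => ENNReal.ofReal ‖x - y‖⁻¹) y
      = (Metric.ball (0 : E2) R).indicator (fun z => ENNReal.ofReal ‖z‖⁻¹) (x - y) := by
    intro y
    have hmem : y ∈ Metric.ball x R ↔ x - y ∈ Metric.ball (0 : E2) R := by
      rw [Metric.mem_ball, Metric.mem_ball, dist_zero_right, dist_comm, dist_eq_norm]
    by_cases h : y ∈ Metric.ball x R
    · rw [Set.indicator_of_mem h, Set.indicator_of_mem (hmem.1 h)]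
    · rw [Set.indicator_of_notMem h, Set.indicator_of_notMem (fun hc => h (hmem.2 hc))]
  simp_rw [key]
  exact lint_comp_sub _ x

lemma lint_ball_far (c x : E2) (r : ℝ) (hr : 0 < r) :
    ∫⁻ y in Metric.ball c r, ENNReal.ofReal ‖x - y‖⁻¹ ≤ ENNReal.ofReal (9 * π * r) := by
  have hsub : Metric.ball c r ⊆ Metric.ball x (2 * r) ∪ (Metric.ball c r \ Metric.ball x (2 * r)) := by
    intro y hy
    by_cases h : y ∈ Metric.ball x (2 * r)
    · exact Or.inl h
    · exact Or.inr ⟨hy, h⟩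
  calc ∫⁻ y in Metric.ball c r, ENNReal.ofReal ‖x - y‖⁻¹
      ≤ ∫⁻ y in (Metric.ball x (2 * r) ∪ (Metric.ball c r \ Metric.ball x (2 * r))),
          ENNReal.ofReal ‖x - y‖⁻¹ := lintegral_mono_set hsub
    _ ≤ (∫⁻ y in Metric.ball x (2 * r), ENNReal.ofReal ‖x - y‖⁻¹)
        + ∫⁻ y in (Metric.ball c r \ Metric.ball x (2 * r)), ENNReal.ofReal ‖x - y‖⁻¹ :=
        lintegral_union_le _ _ _
    _ ≤ ENNReal.ofReal (4 * π * (2 * r)) + ENNReal.ofReal ((2 * r)⁻¹) * ENNReal.ofReal (π * r ^ 2) := by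
        gcongr
        · rw [lint_ball_shift]
          exact lint_ball_inv_norm _ (by positivity)
        · calc ∫⁻ y in (Metric.ball c r \ Metric.ball x (2 * r)), ENNReal.ofReal ‖x - y‖⁻¹
              ≤ ∫⁻ _ in (Metric.ball c r \ Metric.ball x (2 * r)), ENNReal.ofReal ((2 * r)⁻¹) := by
                refine setLIntegral_mono' (measurableSet_ball.diff measurableSet_ball)
                  fun y hy => ?_
                apply ENNReal.ofReal_le_ofReal
                have h1 : 2 * r ≤ ‖x - y‖ := by
                  have := hy.2
                  rw [Metric.mem_ball, not_lt, dist_comm, dist_eq_norm] at this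
                  exact this
                exact inv_anti₀ (by positivity) h1
            _ = ENNReal.ofReal ((2 * r)⁻¹) * volume (Metric.ball c r \ Metric.ball x (2 * r)) :=
                setLIntegral_const _ _
            _ ≤ ENNReal.ofReal ((2 * r)⁻¹) * ENNReal.ofReal (π * r ^ 2) := by
                gcongr
                rw [← vol_ball c r hr.le]
                exact measure_mono Set.diff_subset
    _ ≤ ENNReal.ofReal (9 * π * r) := by
        rw [← ENNReal.ofReal_mul (by positivity), ← ENNReal.ofReal_add (by positivity) (by positivity)]
        apply ENNReal.ofReal_le_ofReal
        have : (2 * r)⁻¹ * (π * r ^ 2) = π * r / 2 := by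
          field_simp
        rw [this]
        nlinarith [pi_pos]

/-- For every `k ∈ ℤ₊` and `λ > 1` there is a constant `C > 0`
depending only on `x*` (not on `k`, `λ`, `p`, `ρ`) such that for `j = 1, 2` and every
`x ∈ ℝ²`, `|∫ K_j(x−y) β_{k,λ}(y) dy| ≤ C k^{-1/2} λ^{-1+2/p} ‖ρ‖_∞`, where
`K_j(z) = z_j/(2π|z|²)` is the kernel of `∂_j Δ⁻¹`. -/
theorem riesz_potential_beta_bound (xs : E2) :
    ∃ C > 0,
      ∀ (ρ : E2 → ℝ),
        ContDiff ℝ (⊤ : ℕ∞) ρ →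
        (∀ x, 0 ≤ ρ x) → (∀ x, ρ x ≤ 1) →
        tsupport ρ ⊆ Metric.ball 0 2 →
        (∀ x ∈ Metric.ball (0 : E2) 1, ρ x = 1) →
        ∀ k : ℕ, 0 < k → ∀ l : ℝ, 1 < l → ∀ p : ℝ, 2 < p →
          ∀ j : Fin 2, ∀ x : E2,
            |∫ y : E2, ((x j - y j) / (2 * π * ‖x - y‖ ^ 2)) * betaKL xs ρ k l p y|
              ≤ C * (Real.sqrt k)⁻¹ * l ^ (-1 + 2/p) * (⨆ z : E2, |ρ z|) := by
  refine ⟨144, by norm_num, ?_⟩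
  intro ρ _ hρ0 hρ1 hsupp _ k hk l hl p hp j x
  have hl0 : (0:ℝ) < l := lt_trans one_pos hl
  set Mρ := ⨆ z : E2, |ρ z| with hMdef
  have hbdd : BddAbove (Set.range fun z : E2 => |ρ z|) :=
    ⟨1, by rintro _ ⟨z, rfl⟩; show |ρ z| ≤ 1; rw [abs_of_nonneg (hρ0 z)]; exact hρ1 z⟩
  have hMle : ∀ w, |ρ w| ≤ Mρ := fun w => le_ciSup hbdd w
  have hM0 : 0 ≤ Mρ := (abs_nonneg _).trans (hMle 0)
  set L := l ^ (-1 + 2/p) with hLdef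
  have hL : 0 < L := Real.rpow_pos_of_pos hl0 _
  have hsk : 0 < Real.sqrt k := Real.sqrt_pos.2 (by exact_mod_cast hk)
  set K := (Real.sqrt (k:ℝ))⁻¹ with hKdef
  have hK0 : 0 < K := inv_pos.2 hsk
  set r := 2 / l with hrdef
  have hr0 : 0 < r := by positivity
  set S := ⋃ ε : Bool × Bool, Metric.ball (xStarSign xs ε) r with hSdef
  have hSmeas : MeasurableSet S := MeasurableSet.iUnion fun ε => measurableSet_ball
  -- β vanishes off S
  have hβ0 : ∀ y, y ∉ S → betaKL xs ρ k l p y = 0 := by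
    intro y hy
    have hz : ∀ ε : Bool × Bool, ρ (l • (y - xStarSign xs ε)) = 0 := by
      intro ε
      apply image_eq_zero_of_notMem_tsupport
      intro hmem
      have h2 := hsupp hmem
      rw [mem_ball_zero_iff] at h2
      have hdist : r ≤ dist y (xStarSign xs ε) := by
        by_contra hcon
        push_neg at hcon
        exact hy (Set.mem_iUnion.2 ⟨ε, Metric.mem_ball.2 hcon⟩)
      rw [dist_eq_norm] at hdist
      have hnorm : ‖l • (y - xStarSign xs ε)‖ = l * ‖y - xStarSign xs ε‖ := by
        rw [norm_smul, Real.norm_eq_abs, abs_of_pos hl0]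
      rw [hnorm] at h2
      have h3 : 2 ≤ l * ‖y - xStarSign xs ε‖ := by
        calc (2:ℝ) = l * r := by rw [hrdef]; field_simp
          _ ≤ l * ‖y - xStarSign xs ε‖ := by
              exact mul_le_mul_of_nonneg_left hdist hl0.le
      linarith
    unfold betaKL
    rw [Finset.sum_eq_zero, mul_zero]
    intro ε _
    rw [hz ε]
    ring
  -- pointwise bound on β
  have hβle : ∀ y, |betaKL xs ρ k l p y| ≤ L * K * (4 * Mρ) := by
    intro y
    unfold betaKL
    rw [abs_mul]
    have h1 : |l ^ (-1 + 2/p) / Real.sqrt (k:ℝ)| = L * K := by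
      rw [abs_of_pos (by positivity), div_eq_mul_inv]
    rw [h1]
    have h2 : |∑ ε : Bool × Bool,
        sgn ε.1 * sgn ε.2 * ρ (l • (y - xStarSign xs ε)) * Real.sin (k * y 0)| ≤ 4 * Mρ := by
      calc |∑ ε : Bool × Bool,
          sgn ε.1 * sgn ε.2 * ρ (l • (y - xStarSign xs ε)) * Real.sin (k * y 0)|
          ≤ ∑ ε : Bool × Bool,
            |sgn ε.1 * sgn ε.2 * ρ (l • (y - xStarSign xs ε)) * Real.sin (k * y 0)| :=
          Finset.abs_sum_le_sum_abs _ _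
        _ ≤ ∑ _ε : Bool × Bool, Mρ := by
            refine Finset.sum_le_sum fun ε _ => ?_
            rw [abs_mul, abs_mul, abs_mul]
            have hs1 : |sgn ε.1| = 1 := by cases ε.1 <;> simp [sgn]
            have hs2 : |sgn ε.2| = 1 := by cases ε.2 <;> simp [sgn]
            have hsin : |Real.sin ((k:ℝ) * y 0)| ≤ 1 :=
              abs_le.2 ⟨Real.neg_one_le_sin _, Real.sin_le_one _⟩
            rw [hs1, hs2, one_mul, one_mul]
            calc |ρ (l • (y - xStarSign xs ε))| * |Real.sin ((k:ℝ) * y 0)|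
                ≤ Mρ * 1 := by
                  apply mul_le_mul (hMle _) hsin (abs_nonneg _) hM0
              _ = Mρ := mul_one _
        _ = 4 * Mρ := by
            rw [Finset.sum_const, Finset.card_univ]
            simp [mul_comm]
    exact mul_le_mul_of_nonneg_left h2 (by positivity)
  -- kernel bound
  have hker : ∀ y : E2, |(x j - y j) / (2 * π * ‖x - y‖ ^ 2)| ≤ (2 * π)⁻¹ * ‖x - y‖⁻¹ := by
    intro y
    rcases eq_or_ne (x - y) 0 with h0 | h0
    · rw [sub_eq_zero] at h0
      rw [h0]
      simp
    · have hn : 0 < ‖x - y‖ := norm_pos_iff.2 h0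
      have habs : |x j - y j| ≤ ‖x - y‖ := by
        have h := abs_coord_le_norm (x - y) j
        have : (x - y) j = x j - y j := rfl
        rwa [this] at h
      rw [abs_div, abs_of_pos (show (0:ℝ) < 2 * π * ‖x - y‖ ^ 2 by positivity),
        div_le_iff₀ (by positivity)]
      have heq : (2 * π)⁻¹ * ‖x - y‖⁻¹ * (2 * π * ‖x - y‖ ^ 2) = ‖x - y‖ := by
        field_simp
      rw [heq]
      exact habs
  -- main pointwise domination
  set B := (2 * π)⁻¹ * (L * K * (4 * Mρ)) with hBdef
  have hB0 : 0 ≤ B := by positivity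
  have key : ∀ y : E2,
      ENNReal.ofReal ‖((x j - y j) / (2 * π * ‖x - y‖ ^ 2)) * betaKL xs ρ k l p y‖
        ≤ ENNReal.ofReal B * S.indicator (fun y => ENNReal.ofReal ‖x - y‖⁻¹) y := by
    intro y
    by_cases hy : y ∈ S
    · rw [Set.indicator_of_mem hy, ← ENNReal.ofReal_mul hB0]
      apply ENNReal.ofReal_le_ofReal
      rw [Real.norm_eq_abs, abs_mul]
      calc |(x j - y j) / (2 * π * ‖x - y‖ ^ 2)| * |betaKL xs ρ k l p y|
          ≤ ((2 * π)⁻¹ * ‖x - y‖⁻¹) * (L * K * (4 * Mρ)) := by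
            apply mul_le_mul (hker y) (hβle y) (abs_nonneg _) (by positivity)
        _ = B * ‖x - y‖⁻¹ := by rw [hBdef]; ring
    · rw [Set.indicator_of_notMem hy, mul_zero, hβ0 y hy, mul_zero]
      simp
  -- bound the lintegral of the dominating function
  have hlint : ∫⁻ y, ENNReal.ofReal B * S.indicator (fun y => ENNReal.ofReal ‖x - y‖⁻¹) y
      ≤ ENNReal.ofReal (B * (72 * π)) := by
    rw [lintegral_const_mul' _ _ ENNReal.ofReal_ne_top, lintegral_indicator hSmeas]
    have hS : ∫⁻ y in S, ENNReal.ofReal ‖x - y‖⁻¹ ≤ ENNReal.ofReal (72 * π) := by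
      calc ∫⁻ y in S, ENNReal.ofReal ‖x - y‖⁻¹
          ≤ ∑' ε : Bool × Bool,
            ∫⁻ y in Metric.ball (xStarSign xs ε) r, ENNReal.ofReal ‖x - y‖⁻¹ :=
            lintegral_iUnion_le _ _
        _ ≤ ∑' _ε : Bool × Bool, ENNReal.ofReal (9 * π * r) :=
            ENNReal.tsum_le_tsum fun ε => lint_ball_far _ x r hr0
        _ = 4 * ENNReal.ofReal (9 * π * r) := by
            rw [tsum_fintype, Finset.sum_const, Finset.card_univ]
            simp [mul_comm]
        _ ≤ ENNReal.ofReal (72 * π) := by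
            rw [show (4 : ℝ≥0∞) = ENNReal.ofReal 4 by norm_num,
              ← ENNReal.ofReal_mul (by norm_num)]
            apply ENNReal.ofReal_le_ofReal
            have hrle : r ≤ 2 := by
              rw [hrdef, div_le_iff₀ hl0]
              linarith
            nlinarith [pi_pos]
    calc ENNReal.ofReal B * ∫⁻ y in S, ENNReal.ofReal ‖x - y‖⁻¹
        ≤ ENNReal.ofReal B * ENNReal.ofReal (72 * π) := mul_le_mul_right hS _
      _ = ENNReal.ofReal (B * (72 * π)) := (ENNReal.ofReal_mul hB0).symm
  -- conclude
  calc |∫ y : E2, ((x j - y j) / (2 * π * ‖x - y‖ ^ 2)) * betaKL xs ρ k l p y|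
      = ‖∫ y : E2, ((x j - y j) / (2 * π * ‖x - y‖ ^ 2)) * betaKL xs ρ k l p y‖ :=
        (Real.norm_eq_abs _).symm
    _ ≤ (∫⁻ y : E2, ENNReal.ofReal ‖((x j - y j) / (2 * π * ‖x - y‖ ^ 2)) * betaKL xs ρ k l p y‖).toReal :=
        norm_integral_le_lintegral_norm _
    _ ≤ 144 * K * L * Mρ := by
        apply ENNReal.toReal_le_of_le_ofReal (by positivity)
        calc ∫⁻ y : E2, ENNReal.ofReal ‖((x j - y j) / (2 * π * ‖x - y‖ ^ 2)) * betaKL xs ρ k l p y‖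
            ≤ ∫⁻ y, ENNReal.ofReal B * S.indicator (fun y => ENNReal.ofReal ‖x - y‖⁻¹) y :=
              lintegral_mono key
          _ ≤ ENNReal.ofReal (B * (72 * π)) := hlint
          _ = ENNReal.ofReal (144 * K * L * Mρ) := by
              congr 1
              rw [hBdef]
              have hπ : (0:ℝ) < π := pi_pos
              field_simp
              ring

end
end

section
/- Let k ∈ ℤ₊, λ ≥ 1, 2 < p < ∞, and let g : ℝ² → ℝ be a C¹ function whose partial derivative ∂₁g is bounded on ∪_{ε₁,ε₂=±1} B(x*_ε, 2). Then ‖ (∂₂β_{k,λ}) · (∂₁g) ‖_{L^p(ℝ²)} ≤ 4 k^{-1/2} ‖∂₂ρ‖_{L^p(ℝ²)} · sup_{x ∈ ∪_{ε} B(x*_ε, 2)} |∂₁g(x)|. -/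
open Real MeasureTheory
open scoped ENNReal

noncomputable section

/-- The `i`-th partial derivative of a scalar function on `ℝ²`. -/
noncomputable def pd (f : E2 → ℝ) (x : E2) (i : Fin 2) : ℝ :=
  fderiv ℝ f x (EuclideanSpace.single i 1)

lemma hasFDerivAt_term (ρ : E2 → ℝ) (hρ : ContDiff ℝ (⊤ : ℕ∞) ρ) (c l : ℝ) (a : E2) (k : ℕ) (x : E2) :
    HasFDerivAt (fun x : E2 => c * ρ (l • (x - a)) * Real.sin (k * x 0))
      ((c * ρ (l • (x - a))) • (Real.cos (k * x 0) • ((k : ℝ) • (EuclideanSpace.proj (0 : Fin 2) : E2 →L[ℝ] ℝ)))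
        + Real.sin (k * x 0) • (c • ((fderiv ℝ ρ (l • (x - a))).comp (l • (ContinuousLinearMap.id ℝ E2))))) x := by
  have hA : HasFDerivAt (fun x : E2 => l • (x - a)) (l • (ContinuousLinearMap.id ℝ E2)) x :=
    ((hasFDerivAt_id x).sub_const a).const_smul l
  have hρ' : HasFDerivAt ρ (fderiv ℝ ρ (l • (x - a))) (l • (x - a)) :=
    (hρ.differentiable (by simp) (l • (x - a))).hasFDerivAt
  have h1 : HasFDerivAt (fun x : E2 => c * ρ (l • (x - a)))
      (c • ((fderiv ℝ ρ (l • (x - a))).comp (l • (ContinuousLinearMap.id ℝ E2)))) x :=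
    (hρ'.comp x hA).const_mul c
  have hx0 : HasFDerivAt (fun x : E2 => (k : ℝ) * x 0)
      ((k : ℝ) • (EuclideanSpace.proj (0 : Fin 2) : E2 →L[ℝ] ℝ)) x :=
    ((EuclideanSpace.proj (0 : Fin 2) : E2 →L[ℝ] ℝ).hasFDerivAt).const_mul (k : ℝ)
  have hsin : HasFDerivAt (fun x : E2 => Real.sin ((k : ℝ) * x 0))
      (Real.cos ((k : ℝ) * x 0) • ((k : ℝ) • (EuclideanSpace.proj (0 : Fin 2) : E2 →L[ℝ] ℝ))) x :=
    by have := (Real.hasDerivAt_sin ((k : ℝ) * x 0)).comp_hasFDerivAt x hx0; exact this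
  exact h1.mul hsin

lemma pd_betaKL (xs : E2) (ρ : E2 → ℝ) (hρ : ContDiff ℝ (⊤ : ℕ∞) ρ) (k : ℕ) (l p : ℝ) (x : E2) :
    pd (betaKL xs ρ k l p) x 1 =
      l ^ (-1 + 2/p) / Real.sqrt k *
        ∑ ε : Bool × Bool,
          sgn ε.1 * sgn ε.2 * (l * pd ρ (l • (x - xStarSign xs ε)) 1) * Real.sin (k * x 0) := by
  have hsum : HasFDerivAt (fun x : E2 => ∑ ε : Bool × Bool,
      sgn ε.1 * sgn ε.2 * ρ (l • (x - xStarSign xs ε)) * Real.sin (k * x 0))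
      (∑ ε : Bool × Bool,
        (((sgn ε.1 * sgn ε.2) * ρ (l • (x - xStarSign xs ε))) • (Real.cos (k * x 0) • ((k : ℝ) • (EuclideanSpace.proj (0 : Fin 2) : E2 →L[ℝ] ℝ)))
        + Real.sin (k * x 0) • ((sgn ε.1 * sgn ε.2) • ((fderiv ℝ ρ (l • (x - xStarSign xs ε))).comp (l • (ContinuousLinearMap.id ℝ E2)))))) x := by
    apply HasFDerivAt.fun_sum
    intro ε _
    exact hasFDerivAt_term ρ hρ (sgn ε.1 * sgn ε.2) l (xStarSign xs ε) k x
  have hβ : HasFDerivAt (betaKL xs ρ k l p)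
      ((l ^ (-1 + 2/p) / Real.sqrt k) • (∑ ε : Bool × Bool,
        (((sgn ε.1 * sgn ε.2) * ρ (l • (x - xStarSign xs ε))) • (Real.cos (k * x 0) • ((k : ℝ) • (EuclideanSpace.proj (0 : Fin 2) : E2 →L[ℝ] ℝ)))
        + Real.sin (k * x 0) • ((sgn ε.1 * sgn ε.2) • ((fderiv ℝ ρ (l • (x - xStarSign xs ε))).comp (l • (ContinuousLinearMap.id ℝ E2))))))) x :=
    hsum.const_mul _
  rw [pd, hβ.fderiv]
  simp only [ContinuousLinearMap.smul_apply, ContinuousLinearMap.sum_apply,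
    ContinuousLinearMap.add_apply, ContinuousLinearMap.coe_comp', Function.comp_apply,
    ContinuousLinearMap.coe_smul', Pi.smul_apply, ContinuousLinearMap.coe_id', id_eq]
  rw [smul_eq_mul, Finset.mul_sum, Finset.mul_sum]
  apply Finset.sum_congr rfl
  intro ε _
  have hproj : (EuclideanSpace.proj (0 : Fin 2) : E2 →L[ℝ] ℝ) (EuclideanSpace.single (1 : Fin 2) (1 : ℝ)) = 0 := by
    simp [EuclideanSpace.single_apply]
  rw [hproj, (fderiv ℝ ρ (l • (x - xStarSign xs ε))).map_smul]
  simp only [smul_eq_mul, pd, smul_zero, mul_zero, zero_add]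
  ring

lemma eLpNorm_comp_smul_sub (h : E2 → ℝ) (l : ℝ) (hl : 0 < l) (a : E2) (q : ℝ≥0∞) :
    eLpNorm (fun x => h (l • (x - a))) q volume
      = (ENNReal.ofReal ((l ^ 2)⁻¹)) ^ (1/q).toReal * eLpNorm h q volume := by
  have hlne : l ≠ 0 := hl.ne'
  let u : ℝˣ := (isUnit_iff_ne_zero.2 hlne).unit
  let φ : E2 ≃ₜ E2 := (Homeomorph.addRight (-a)).trans (Homeomorph.smul u)
  have hφ : ∀ x : E2, φ x = l • (x - a) := by
    intro x
    show u • (x + -a) = l • (x - a)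
    rw [Units.smul_def, sub_eq_add_neg]
    norm_num [u]
  have hmap : Measure.map φ (volume : Measure E2)
      = (ENNReal.ofReal ((l ^ 2)⁻¹)) • volume := by
    have h1 : Measure.map φ (volume : Measure E2)
        = Measure.map (l • ·) (Measure.map (· + -a) volume) := by
      rw [Measure.map_map (measurable_const_smul l) (measurable_add_const (-a))]
      congr 1
    rw [h1, MeasureTheory.map_add_right_eq_self volume (-a), MeasureTheory.Measure.map_addHaar_smul volume hlne]
    congr 1
    · rw [finrank_euclideanSpace_fin, abs_of_nonneg (by positivity)]
  calc eLpNorm (fun x => h (l • (x - a))) q volume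
      = eLpNorm (h ∘ φ) q volume := by
        congr 1
    _ = eLpNorm h q (Measure.map φ volume) := (φ.measurableEmbedding.eLpNorm_map_measure).symm
    _ = (ENNReal.ofReal ((l ^ 2)⁻¹)) ^ (1/q).toReal * eLpNorm h q volume := by
        rw [hmap, eLpNorm_smul_measure_of_ne_zero (by simp [ENNReal.ofReal_eq_zero, not_le]; positivity), smul_eq_mul]

lemma pd_eq_zero_of_not_mem_tsupport (ρ : E2 → ℝ) {y : E2} (hy : y ∉ tsupport ρ) (i : Fin 2) :
    pd ρ y i = 0 := by
  have h : ρ =ᶠ[nhds y] (fun _ => (0:ℝ)) := notMem_tsupport_iff_eventuallyEq.mp hy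
  rw [pd, h.fderiv_eq, fderiv_fun_const]
  simp

lemma pd_cont (ρ : E2 → ℝ) (hρ : ContDiff ℝ (⊤ : ℕ∞) ρ) (i : Fin 2) :
    Continuous (fun y => pd ρ y i) :=
  (hρ.continuous_fderiv (by simp)).clm_apply continuous_const

lemma pd_compact_support (ρ : E2 → ℝ) (hρ_supp : tsupport ρ ⊆ Metric.ball 0 2) (i : Fin 2) :
    HasCompactSupport (fun y => pd ρ y i) := by
  have hsub : Function.support (fun y => pd ρ y i) ⊆ tsupport ρ := by
    intro y hy
    by_contra hc
    exact hy (pd_eq_zero_of_not_mem_tsupport ρ hc i)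
  have hcomp : IsCompact (tsupport ρ) := by
    apply Metric.isCompact_of_isClosed_isBounded (isClosed_tsupport ρ)
    exact (Metric.isBounded_ball).subset hρ_supp
  exact HasCompactSupport.intro hcomp (fun y hy => by
    by_contra hc
    exact hy (hsub hc))

/-- Let `k ∈ ℤ₊`, `λ ≥ 1`, `2 < p < ∞`, and let `g : ℝ² → ℝ` be `C¹`
with `∂₁g` bounded on `∪_ε B(x*_ε, 2)`.  Then
`‖(∂₂β_{k,λ})·(∂₁g)‖_{Lᵖ} ≤ 4 k^{-1/2} ‖∂₂ρ‖_{Lᵖ} · sup_{x ∈ ∪_ε B(x*_ε,2)} |∂₁g(x)|`. -/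
theorem beta_cross_term_bound
    (xs : E2) (ρ : E2 → ℝ)
    (hρ_smooth : ContDiff ℝ (⊤ : ℕ∞) ρ)
    (hρ_nonneg : ∀ x, 0 ≤ ρ x) (hρ_le_one : ∀ x, ρ x ≤ 1)
    (hρ_supp : tsupport ρ ⊆ Metric.ball 0 2)
    (hρ_one : ∀ x ∈ Metric.ball (0 : E2) 1, ρ x = 1)
    (k : ℕ) (hk : 0 < k) (l : ℝ) (hl : 1 ≤ l) (p : ℝ) (hp : 2 < p)
    (g : E2 → ℝ) (hg : ContDiff ℝ 1 g)
    (hg_bdd : ∃ B : ℝ, ∀ ε : Bool × Bool, ∀ x ∈ Metric.ball (xStarSign xs ε) 2,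
      |pd g x 0| ≤ B) :
    (eLpNorm (fun x => pd (betaKL xs ρ k l p) x 1 * pd g x 0)
        (ENNReal.ofReal p) volume).toReal
      ≤ 4 * (Real.sqrt k)⁻¹ *
          (eLpNorm (fun x => pd ρ x 1) (ENNReal.ofReal p) volume).toReal *
          (⨆ x : (⋃ ε : Bool × Bool, Metric.ball (xStarSign xs ε) 2), |pd g x 0|) := by
  obtain ⟨B, hB⟩ := hg_bdd
  have hl0 : (0:ℝ) < l := lt_of_lt_of_le one_pos hl
  have hp0 : (0:ℝ) < p := by linarith
  have hk0 : (0:ℝ) < Real.sqrt k := Real.sqrt_pos.2 (by exact_mod_cast hk)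
  set q : ℝ≥0∞ := ENNReal.ofReal p with hq
  set S : Set E2 := ⋃ ε : Bool × Bool, Metric.ball (xStarSign xs ε) 2 with hS
  set M : ℝ := ⨆ x : S, |pd g x 0| with hMdef
  set N : ℝ≥0∞ := eLpNorm (fun x => pd ρ x 1) q volume with hN
  -- basic facts about M
  have hbdd : BddAbove (Set.range fun x : S => |pd g (x : E2) 0|) := by
    refine ⟨B, ?_⟩
    rintro r ⟨⟨x, hx⟩, rfl⟩
    obtain ⟨t, ⟨ε, rfl⟩, hxε⟩ := hx
    exact hB ε x hxε
  have hMle : ∀ x ∈ S, |pd g x 0| ≤ M := fun x hx => le_ciSup hbdd ⟨x, hx⟩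
  have hx0S : xStarSign xs (true, true) ∈ S :=
    Set.mem_iUnion.2 ⟨(true, true), Metric.mem_ball_self (by norm_num)⟩
  have hM0 : 0 ≤ M := le_trans (abs_nonneg _) (hMle _ hx0S)
  -- constants
  set c0 : ℝ := l ^ (-1 + 2/p) / Real.sqrt k with hc0
  have hc0nn : 0 ≤ c0 := div_nonneg (Real.rpow_nonneg hl0.le _) hk0.le
  -- pointwise bound
  set G : Bool × Bool → E2 → ℝ :=
    fun ε x => (c0 * l * M) * |pd ρ (l • (x - xStarSign xs ε)) 1| with hG
  have hterm : ∀ (ε : Bool × Bool) (x : E2),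
      |c0 * (sgn ε.1 * sgn ε.2 * (l * pd ρ (l • (x - xStarSign xs ε)) 1) * Real.sin (k * x 0))
        * pd g x 0| ≤ G ε x := by
    intro ε x
    set r := pd ρ (l • (x - xStarSign xs ε)) 1 with hr
    by_cases hr0 : r = 0
    · simp [hG, ← hr, hr0]
    · have hmem : l • (x - xStarSign xs ε) ∈ tsupport ρ := by
        by_contra hc
        exact hr0 (pd_eq_zero_of_not_mem_tsupport ρ hc 1)
      have hxball : x ∈ Metric.ball (xStarSign xs ε) 2 := by
        have h2 := hρ_supp hmem
        rw [Metric.mem_ball, dist_zero_right, norm_smul, Real.norm_eq_abs,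
          abs_of_pos hl0] at h2
        rw [Metric.mem_ball, dist_eq_norm]
        have hn : (0:ℝ) ≤ ‖x - xStarSign xs ε‖ := norm_nonneg _
        nlinarith
      have hd : |pd g x 0| ≤ M := hMle x (Set.mem_iUnion.2 ⟨ε, hxball⟩)
      have hsgn : ∀ b : Bool, |sgn b| = 1 := by intro b; cases b <;> simp [sgn]
      calc |c0 * (sgn ε.1 * sgn ε.2 * (l * r) * Real.sin (k * x 0)) * pd g x 0|
          = (c0 * l * |r|) * (|Real.sin (k * x 0)| * |pd g x 0|) := by
            simp only [abs_mul, hsgn, abs_of_nonneg hc0nn, abs_of_nonneg hl0.le]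
            ring
        _ ≤ (c0 * l * |r|) * (1 * M) := by
            have hs : |Real.sin ((k:ℝ) * x 0)| ≤ 1 := Real.abs_sin_le_one _
            have h1 : |Real.sin ((k:ℝ) * x 0)| * |pd g x 0| ≤ 1 * M :=
              mul_le_mul hs hd (abs_nonneg _) one_pos.le
            exact mul_le_mul_of_nonneg_left h1 (by positivity)
        _ = G ε x := by rw [hG]; dsimp only; rw [← hr]; ring
  -- pointwise comparison of norms
  have hpt : ∀ x : E2, ‖pd (betaKL xs ρ k l p) x 1 * pd g x 0‖
      ≤ ‖(∑ ε : Bool × Bool, G ε) x‖ := by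
    intro x
    rw [Real.norm_eq_abs, Real.norm_eq_abs, pd_betaKL xs ρ hρ_smooth k l p x, ← hc0]
    have hFx : (∑ ε : Bool × Bool, G ε) x = ∑ ε : Bool × Bool, G ε x := by
      simp [Finset.sum_apply]
    rw [hFx]
    calc |(c0 * ∑ ε : Bool × Bool,
            sgn ε.1 * sgn ε.2 * (l * pd ρ (l • (x - xStarSign xs ε)) 1) * Real.sin (k * x 0))
            * pd g x 0|
        = |∑ ε : Bool × Bool,
            c0 * (sgn ε.1 * sgn ε.2 * (l * pd ρ (l • (x - xStarSign xs ε)) 1) * Real.sin (k * x 0))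
            * pd g x 0| := by rw [Finset.mul_sum, Finset.sum_mul]
      _ ≤ ∑ ε : Bool × Bool,
            |c0 * (sgn ε.1 * sgn ε.2 * (l * pd ρ (l • (x - xStarSign xs ε)) 1) * Real.sin (k * x 0))
            * pd g x 0| := Finset.abs_sum_le_sum_abs _ _
      _ ≤ ∑ ε : Bool × Bool, G ε x := Finset.sum_le_sum (fun ε _ => hterm ε x)
      _ ≤ |∑ ε : Bool × Bool, G ε x| := le_abs_self _
  have step1 : eLpNorm (fun x => pd (betaKL xs ρ k l p) x 1 * pd g x 0) q volume
      ≤ eLpNorm (∑ ε : Bool × Bool, G ε) q volume := eLpNorm_mono hpt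
  have hGmeas : ∀ ε : Bool × Bool, AEStronglyMeasurable (G ε) volume := by
    intro ε
    apply Continuous.aestronglyMeasurable
    apply Continuous.mul continuous_const
    exact ((pd_cont ρ hρ_smooth 1).comp
      ((continuous_id.sub continuous_const).const_smul l)).abs
  have hq1 : (1:ℝ≥0∞) ≤ q := by
    rw [hq]; exact ENNReal.one_le_ofReal.2 (by linarith)
  have step2 : eLpNorm (∑ ε : Bool × Bool, G ε) q volume
      ≤ ∑ ε : Bool × Bool, eLpNorm (G ε) q volume :=
    eLpNorm_sum_le (fun ε _ => hGmeas ε) hq1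
  -- compute eLpNorm of each G ε
  have h1q : (1/q).toReal = 1/p := by
    rw [hq, one_div, ENNReal.toReal_inv, ENNReal.toReal_ofReal hp0.le, one_div]
  have hconst : c0 * l * M * ((l^2)⁻¹) ^ (1/p) = (Real.sqrt k)⁻¹ * M := by
    have h2 : ((l^2)⁻¹ : ℝ) = l ^ ((-2 : ℝ)) := by
      rw [Real.rpow_neg hl0.le, Real.rpow_two]
    have h3 : ((l^2)⁻¹ : ℝ) ^ (1/p) = l ^ ((-2) * (1/p)) := by
      rw [h2, ← Real.rpow_mul hl0.le]
    rw [hc0, h3]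
    have h4 : l ^ (-1 + 2/p) * l * l ^ ((-2) * (1/p)) = 1 := by
      have e1 : l ^ (-1 + 2/p) * l ^ (1:ℝ) * l ^ ((-2) * (1/p))
          = l ^ ((-1 + 2/p) + 1 + (-2) * (1/p)) := by
        rw [← Real.rpow_add hl0, ← Real.rpow_add hl0]
      have e2 : (-1 + 2/p) + 1 + (-2) * (1/p) = 0 := by field_simp; ring
      rw [Real.rpow_one] at e1
      rw [e1, e2, Real.rpow_zero]
    calc l ^ (-1 + 2/p) / Real.sqrt (k:ℝ) * l * M * l ^ ((-2) * (1/p))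
        = (l ^ (-1 + 2/p) * l * l ^ ((-2) * (1/p))) * M / Real.sqrt (k:ℝ) := by ring
      _ = (Real.sqrt (k:ℝ))⁻¹ * M := by rw [h4]; field_simp
  have hGnorm : ∀ ε : Bool × Bool, eLpNorm (G ε) q volume
      = ENNReal.ofReal ((Real.sqrt k)⁻¹ * M) * N := by
    intro ε
    have hGdef : G ε = (c0 * l * M) • (fun x => |pd ρ (l • (x - xStarSign xs ε)) 1|) := by
      funext x; simp [hG, smul_eq_mul]
    rw [hGdef, eLpNorm_const_smul]
    have habs : eLpNorm (fun x => |pd ρ (l • (x - xStarSign xs ε)) 1|) q volume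
        = (ENNReal.ofReal ((l ^ 2)⁻¹)) ^ (1/q).toReal * N := by
      rw [eLpNorm_comp_smul_sub (fun y => |pd ρ y 1|) l hl0 _ q]
      congr 1
      rw [hN]
      simpa [Real.norm_eq_abs] using eLpNorm_norm (F := ℝ) (fun y => pd ρ y 1) (p := q) (μ := volume)
    rw [habs, ← mul_assoc]
    congr 1
    have hcnn : (0:ℝ) ≤ c0 * l * M := by positivity
    rw [← ofReal_norm_eq_enorm, Real.norm_eq_abs, abs_of_nonneg hcnn, h1q,
      ENNReal.ofReal_rpow_of_pos (by positivity), ← ENNReal.ofReal_mul hcnn, hconst]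
  have step3 : (∑ ε : Bool × Bool, eLpNorm (G ε) q volume)
      = 4 * (ENNReal.ofReal ((Real.sqrt k)⁻¹ * M) * N) := by
    rw [Finset.sum_congr rfl (fun ε _ => hGnorm ε), Finset.sum_const]
    simp only [Finset.card_univ]
    rw [show Fintype.card (Bool × Bool) = 4 by simp, nsmul_eq_mul]
    norm_num
  have total : eLpNorm (fun x => pd (betaKL xs ρ k l p) x 1 * pd g x 0) q volume
      ≤ 4 * (ENNReal.ofReal ((Real.sqrt k)⁻¹ * M) * N) := by
    rw [← step3]; exact le_trans step1 step2
  -- finiteness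
  have hNfin : N ≠ ⊤ := by
    rw [hN]
    exact ((pd_cont ρ hρ_smooth 1).memLp_of_hasCompactSupport
      (pd_compact_support ρ hρ_supp 1) (p := q) (μ := volume)).eLpNorm_lt_top.ne
  have hRfin : (4 : ℝ≥0∞) * (ENNReal.ofReal ((Real.sqrt k)⁻¹ * M) * N) ≠ ⊤ := by
    apply ENNReal.mul_ne_top (by norm_num)
    exact ENNReal.mul_ne_top ENNReal.ofReal_ne_top hNfin
  have final := ENNReal.toReal_mono hRfin total
  rw [ENNReal.toReal_mul, ENNReal.toReal_mul, ENNReal.toReal_ofReal (by positivity)] at final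
  have h44 : ((4:ℝ≥0∞)).toReal = 4 := by norm_num
  rw [h44] at final
  refine le_trans final (le_of_eq ?_)
  ring

end
end

section
/- Let T > 0 and let u : [0,T] × ℝ² → ℝ² be a continuous vector field, Lipschitz in x uniformly in t, satisfying u₁(t, (0, x₂)) = 0 and u₂(t, (x₁, 0)) = 0 for all t ∈ [0,T] and x₁, x₂ ∈ ℝ. Let η be the flow of u: ∂ₜη(t,x) = u(t, η(t,x)), η(0,x) = x. Then the flow is sign-preserving in each component: for i = 1, 2, if x_i ≥ 0 then η_i(t,x) ≥ 0 for all t ∈ [0,T], and if x_i = 0 then η_i(t,x) = 0 for all t ∈ [0,T]. In particular the coordinate axes, the origin, and each closed quadrant are invariant under the flow. -/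
open Real Set

noncomputable section

/-- Let `u` be a continuous time-dependent vector field on `ℝ²`,
Lipschitz in `x` uniformly in `t ∈ [0,T]`, which vanishes in its first component on the
`x₂`-axis and in its second component on the `x₁`-axis.  Then the flow `η` of `u` is
sign-preserving in each component: if `xᵢ ≥ 0` then `ηᵢ(t,x) ≥ 0` for all `t ∈ [0,T]`,
and if `xᵢ = 0` then `ηᵢ(t,x) = 0` for all `t ∈ [0,T]`. -/
theorem flow_sign_preserving
    (T : ℝ) (hT : 0 < T)
    (u : ℝ → E2 → E2)
    (hu_cont : Continuous (Function.uncurry u))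
    (L : NNReal) (hu_lip : ∀ t ∈ Set.Icc (0 : ℝ) T, LipschitzWith L (u t))
    (haxis1 : ∀ t ∈ Set.Icc (0 : ℝ) T, ∀ x₂ : ℝ, u t (WithLp.toLp 2 ![0, x₂] : E2) 0 = 0)
    (haxis2 : ∀ t ∈ Set.Icc (0 : ℝ) T, ∀ x₁ : ℝ, u t (WithLp.toLp 2 ![x₁, 0] : E2) 1 = 0)
    (η : ℝ → E2 → E2)
    (hinit : ∀ x, η 0 x = x)
    (hflow : ∀ x : E2, ∀ t ∈ Set.Icc (0 : ℝ) T,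
      HasDerivWithinAt (fun s => η s x) (u t (η t x)) (Set.Icc 0 T) t) :
    ∀ i : Fin 2, ∀ x : E2, ∀ t ∈ Set.Icc (0 : ℝ) T,
      (0 ≤ x i → 0 ≤ η t x i) ∧ (x i = 0 → η t x i = 0) := by
  -- key coordinate bound: |u t y i| ≤ L * |y i|
  have key : ∀ i : Fin 2, ∀ t ∈ Set.Icc (0 : ℝ) T, ∀ y : E2,
      |u t y i| ≤ (L : ℝ) * |y i| := by
    intro i t ht y
    have coord_le : ∀ (v : E2) (j : Fin 2), |v j| ≤ ‖v‖ := by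
      intro v j
      have := EuclideanSpace.norm_eq v
      rw [this]
      have h1 : |v j| = Real.sqrt (‖v j‖ ^ 2) := by
        rw [Real.sqrt_sq_eq_abs]; simp
      rw [h1]
      apply Real.sqrt_le_sqrt
      exact Finset.single_le_sum (f := fun k => ‖v k‖ ^ 2)
        (fun k _ => by positivity) (Finset.mem_univ j)
    fin_cases i
    · -- i = 0
      set z : E2 := (WithLp.toLp 2 ![0, y 1] : E2) with hz
      have hz0 : u t z 0 = 0 := haxis1 t ht (y 1)
      have hdist : ‖y - z‖ = |y 0| := by
        rw [EuclideanSpace.norm_eq, Fin.sum_univ_two]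
        have h0 : (y - z) 0 = y 0 := by simp [hz]
        have h1 : (y - z) 1 = 0 := by simp [hz]
        rw [h0, h1]
        simp [Real.sqrt_sq_eq_abs]
      calc |u t y 0| = |(u t y - u t z) 0| := by simp [hz0]
        _ ≤ ‖u t y - u t z‖ := coord_le _ _
        _ ≤ (L : ℝ) * ‖y - z‖ := by
            have := (hu_lip t ht).dist_le_mul y z
            rwa [dist_eq_norm, dist_eq_norm] at this
        _ = (L : ℝ) * |y 0| := by rw [hdist]
    · -- i = 1
      set z : E2 := (WithLp.toLp 2 ![y 0, 0] : E2) with hz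
      have hz0 : u t z 1 = 0 := haxis2 t ht (y 0)
      have hdist : ‖y - z‖ = |y 1| := by
        rw [EuclideanSpace.norm_eq, Fin.sum_univ_two]
        have h0 : (y - z) 0 = 0 := by simp [hz]
        have h1 : (y - z) 1 = y 1 := by simp [hz]
        rw [h0, h1]
        simp [Real.sqrt_sq_eq_abs]
      calc |u t y 1| = |(u t y - u t z) 1| := by simp [hz0]
        _ ≤ ‖u t y - u t z‖ := coord_le _ _
        _ ≤ (L : ℝ) * ‖y - z‖ := by
            have := (hu_lip t ht).dist_le_mul y z
            rwa [dist_eq_norm, dist_eq_norm] at this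
        _ = (L : ℝ) * |y 1| := by rw [hdist]
  intro i x
  -- the coordinate function and its derivative
  set f : ℝ → ℝ := fun s => η s x i with hf
  have hderiv : ∀ t ∈ Set.Icc (0 : ℝ) T,
      HasDerivWithinAt f (u t (η t x) i) (Set.Icc 0 T) t := by
    intro t ht
    exact ((EuclideanSpace.proj i : E2 →L[ℝ] ℝ).hasFDerivAt.comp_hasDerivWithinAt t
      (hflow x t ht))
  have hcontf : ContinuousOn f (Set.Icc 0 T) := fun t ht =>
    (hderiv t ht).continuousWithinAt
  -- Gronwall from any starting time s with f s = 0
  have gron : ∀ s ∈ Set.Icc (0 : ℝ) T, f s = 0 → ∀ t ∈ Set.Icc s T, f t = 0 := by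
    intro s hs hfs t ht
    have hsub : Set.Icc s T ⊆ Set.Icc (0 : ℝ) T := Set.Icc_subset_Icc hs.1 le_rfl
    have h := norm_le_gronwallBound_of_norm_deriv_right_le (f := f)
      (f' := fun t => u t (η t x) i) (δ := 0) (K := (L : ℝ)) (ε := 0) (a := s) (b := T)
      (hcontf.mono hsub)
      (fun r hr => by
        have hr' : r ∈ Set.Icc (0 : ℝ) T := hsub ⟨hr.1, hr.2.le⟩
        refine (hderiv r hr').mono_of_mem_nhdsWithin ?_
        exact Filter.mem_of_superset (Icc_mem_nhdsGE_of_mem ⟨le_rfl, hr.2⟩)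
          (Set.Icc_subset_Icc hr'.1 le_rfl))
      (by simp [hfs])
      (fun r hr => by
        have hr' : r ∈ Set.Icc (0 : ℝ) T := hsub ⟨hr.1, hr.2.le⟩
        have := key i r hr' (η r x)
        simpa [Real.norm_eq_abs] using this)
      t ht
    rw [gronwallBound_ε0] at h
    simp only [zero_mul] at h
    have : ‖f t‖ ≤ 0 := h
    simpa using norm_le_zero_iff.mp this
  intro t ht
  constructor
  · -- nonnegativity
    intro hx
    by_contra hneg
    push_neg at hneg
    have hf0 : f 0 = x i := by simp [hf, hinit]
    have hcont' : ContinuousOn f (Set.Icc 0 t) :=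
      hcontf.mono (Set.Icc_subset_Icc le_rfl ht.2)
    have hmem : (0 : ℝ) ∈ Set.Icc (f t) (f 0) := by
      constructor
      · exact hneg.le
      · rw [hf0]; exact hx
    obtain ⟨s, hs, hfs⟩ := intermediate_value_Icc' ht.1 hcont' hmem
    have hsT : s ∈ Set.Icc (0 : ℝ) T := ⟨hs.1, hs.2.trans ht.2⟩
    have := gron s hsT hfs t ⟨hs.2, ht.2⟩
    exact absurd this (by linarith)
  · intro hx
    have hf0 : f 0 = 0 := by simp [hf, hinit, hx]
    exact gron 0 ⟨le_rfl, hT.le⟩ hf0 t ht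

end
end
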